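/- arXiv:1706.00178 — 4 statements merged into one kernel-verified Lean document; each statement's English description precedes it below -/
import Mathlib

section
/- For the preferential personalized MuMoRank with a common damping factor ζ, the total rank outside the preferred sets satisfies ζ·(Σ_{i=1}^M p_{i,o}) ≤ (1−ζ)·|∂U|/min_{i=1,…,M} Vol(U^(i)), where p_{i,o} = Σ_{j∈N_i∖U^(i)} r_j, and |∂U| = Σ_{h∈H} l_n(h)·l_o(h)/M with l_n(h) = |{l : h(l) ∈ U^(l)}| the number of modalities in which h meets the preferred sets and l_o(h) = M − l_n(h). -/
open Finset

/-- For the preferential personalized MuMoRank with common damping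
factor `ζ` (modalities indexed by a nonempty finite type `ι`, `M = card ι`), the total
rank outside the preferred sets satisfies
`ζ·(Σ_i p_{i,o}) ≤ (1−ζ)·|∂U| / min_i Vol(U^(i))`,
where `p_{i,o} = Σ_{j∈N_i∖U^(i)} r_j` and `|∂U| = Σ_{h∈H} l_n(h)·l_o(h)/M`. -/
theorem mumorank_outflow_bound_common_zeta
    {ι : Type*} [Fintype ι] [Nonempty ι] [DecidableEq ι]
    (N : ι → Type*) [∀ i, Fintype (N i)] [∀ i, Nonempty (N i)] [∀ i, DecidableEq (N i)]
    (H : Finset (∀ i, N i)) (hH : H.Nonempty)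
    (deg : ∀ i, N i → ℕ)
    (hdeg : ∀ i (v : N i), deg i v = (H.filter (fun h => h i = v)).card)
    (hcover : ∀ i (v : N i), 0 < deg i v)
    (ζ : ℝ) (hζ : ζ ∈ Set.Ioo (0 : ℝ) 1)
    (U : ∀ i, Finset (N i)) (hU : ∀ i, (U i).Nonempty)
    (Vol : ι → ℝ) (hVol : ∀ i, Vol i = ∑ v ∈ U i, (deg i v : ℝ))
    (s : ∀ i, N i → ℝ)
    (hs : ∀ i (v : N i), s i v = if v ∈ U i then (deg i v : ℝ) / Vol i else 0)
    (r : ∀ i, N i → ℝ)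
    (hr0 : ∀ i (v : N i), 0 ≤ r i v)
    (hr1 : ∀ i, ∑ v, r i v = 1)
    (hr : ∀ i (v : N i), r i v =
      (1 - ζ) * ∑ h ∈ H.filter (fun h => h i = v),
        (1 / (Fintype.card ι : ℝ)) * ∑ l, r l (h l) / (deg l (h l) : ℝ)
      + ζ * s i v)
    (ln lo : (∀ i, N i) → ℕ)
    (hln : ∀ h, ln h = (Finset.univ.filter (fun l => h l ∈ U l)).card)
    (hlo : ∀ h, lo h = Fintype.card ι - ln h)
    (bU : ℝ)
    (hbU : bU = ∑ h ∈ H, ((ln h : ℝ) * (lo h : ℝ)) / (Fintype.card ι : ℝ)) :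
    ζ * (∑ i, ∑ v ∈ (U i)ᶜ, r i v) ≤
      (1 - ζ) * bU / (Finset.univ.inf' Finset.univ_nonempty Vol) := by
  obtain ⟨hζ0, hζ1⟩ := hζ
  have hζ1' : (0:ℝ) ≤ 1 - ζ := by linarith
  have hM0 : (0:ℝ) < (Fintype.card ι : ℝ) := by exact_mod_cast Fintype.card_pos
  set mV : ℝ := Finset.univ.inf' Finset.univ_nonempty Vol with hmVdef
  have hdegpos : ∀ (i : ι) (v : N i), (0:ℝ) < (deg i v : ℝ) := by
    intro i v; exact_mod_cast hcover i v
  have hVolpos : ∀ i, 0 < Vol i := by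
    intro i
    rw [hVol]
    exact Finset.sum_pos (fun v _ => hdegpos i v) (hU i)
  have hmV_le : ∀ i, mV ≤ Vol i := fun i => Finset.inf'_le _ (mem_univ i)
  have hmV0 : 0 < mV := by
    obtain ⟨i, -, hi⟩ := Finset.exists_mem_eq_inf' Finset.univ_nonempty Vol
    rw [hmVdef, hi]; exact hVolpos i
  have hs_le : ∀ (i : ι) (v : N i), s i v ≤ (deg i v : ℝ) / mV := by
    intro i v
    rw [hs]
    split
    · exact div_le_div_of_nonneg_left (hdegpos i v).le hmV0 (hmV_le i)
    · positivity
  -- fiber decomposition lemma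
  have fiber : ∀ (i : ι) (A : Finset (N i)) (F : (∀ i, N i) → ℝ),
      ∑ v ∈ A, ∑ h ∈ H.filter (fun h => h i = v), F h
        = ∑ h ∈ H, if h i ∈ A then F h else 0 := by
    intro i A F
    simp_rw [Finset.sum_filter]
    rw [Finset.sum_comm]
    refine Finset.sum_congr rfl fun h _ => ?_
    simp [Finset.sum_ite_eq]
  -- key lemma : r i v / deg i v ≤ 1 / mV
  have hkey : ∀ (i : ι) (v : N i), r i v / (deg i v : ℝ) ≤ 1 / mV := by
    haveI : Nonempty (Σ i, N i) := ⟨⟨Classical.arbitrary ι, Classical.arbitrary _⟩⟩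
    obtain ⟨p, -, hp⟩ := Finset.exists_max_image (Finset.univ : Finset (Σ i, N i))
      (fun p => r p.1 p.2 / (deg p.1 p.2 : ℝ)) Finset.univ_nonempty
    have hQall : ∀ (i : ι) (v : N i), r i v / (deg i v : ℝ) ≤ r p.1 p.2 / (deg p.1 p.2 : ℝ) :=
      fun i v => hp ⟨i, v⟩ (mem_univ _)
    set Q := r p.1 p.2 / (deg p.1 p.2 : ℝ) with hQdef
    suffices hQle : Q ≤ 1 / mV by intro i v; exact (hQall i v).trans hQle
    have hQ0 : 0 ≤ Q := div_nonneg (hr0 _ _) (hdegpos _ _).le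
    have h1 : r p.1 p.2 ≤ (1-ζ) * ((deg p.1 p.2 : ℝ) * Q) + ζ * ((deg p.1 p.2 : ℝ) / mV) := by
      rw [hr p.1 p.2]
      have hin : ∀ h ∈ H.filter (fun h => h p.1 = p.2),
          (1 / (Fintype.card ι : ℝ)) * ∑ l, r l (h l) / (deg l (h l) : ℝ) ≤ Q := by
        intro h _
        have h2 : ∑ l, r l (h l) / (deg l (h l) : ℝ) ≤ (Fintype.card ι : ℝ) * Q := by
          calc ∑ l, r l (h l) / (deg l (h l) : ℝ) ≤ ∑ _l : ι, Q :=
                Finset.sum_le_sum (fun l _ => hQall l (h l))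
            _ = (Fintype.card ι : ℝ) * Q := by
                rw [Finset.sum_const, Finset.card_univ, nsmul_eq_mul]
        calc (1 / (Fintype.card ι : ℝ)) * ∑ l, r l (h l) / (deg l (h l) : ℝ)
            ≤ (1 / (Fintype.card ι : ℝ)) * ((Fintype.card ι : ℝ) * Q) := by
              apply mul_le_mul_of_nonneg_left h2; positivity
          _ = Q := by field_simp
      have h3 : ∑ h ∈ H.filter (fun h => h p.1 = p.2),
          (1 / (Fintype.card ι : ℝ)) * ∑ l, r l (h l) / (deg l (h l) : ℝ)
            ≤ (deg p.1 p.2 : ℝ) * Q := by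
        calc ∑ h ∈ H.filter (fun h => h p.1 = p.2),
            (1 / (Fintype.card ι : ℝ)) * ∑ l, r l (h l) / (deg l (h l) : ℝ)
            ≤ ∑ _h ∈ H.filter (fun h => h p.1 = p.2), Q := Finset.sum_le_sum hin
          _ = ((H.filter (fun h => h p.1 = p.2)).card : ℝ) * Q := by
              rw [Finset.sum_const, nsmul_eq_mul]
          _ = (deg p.1 p.2 : ℝ) * Q := by rw [hdeg p.1 p.2]
      have h4 : ζ * s p.1 p.2 ≤ ζ * ((deg p.1 p.2 : ℝ) / mV) :=
        mul_le_mul_of_nonneg_left (hs_le p.1 p.2) hζ0.le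
      exact add_le_add (mul_le_mul_of_nonneg_left h3 hζ1') h4
    have h5 : Q ≤ (1-ζ) * Q + ζ * (1 / mV) := by
      rw [hQdef, div_le_iff₀ (hdegpos p.1 p.2)]
      calc r p.1 p.2 ≤ (1-ζ) * ((deg p.1 p.2 : ℝ) * Q) + ζ * ((deg p.1 p.2 : ℝ) / mV) := h1
        _ = ((1-ζ) * Q + ζ * (1 / mV)) * (deg p.1 p.2 : ℝ) := by field_simp
    have h6 : ζ * Q ≤ ζ * (1 / mV) := by linarith
    exact le_of_mul_le_mul_left h6 hζ0
  -- cardinality of "outside" modalities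
  have hcard_lo : ∀ h : ∀ i, N i,
      ((Finset.univ.filter (fun l => ¬ (h l ∈ U l))).card : ℝ) = (lo h : ℝ) := by
    intro h
    have hsum := Finset.card_filter_add_card_filter_not
      (s := (Finset.univ : Finset ι)) (p := fun l => h l ∈ U l)
    rw [Finset.card_univ] at hsum
    have : (Finset.univ.filter (fun l => ¬ (h l ∈ U l))).card = Fintype.card ι - ln h := by
      rw [hln]; omega
    rw [this, hlo]
  -- Step A : exact expression for the outside mass
  set P : ℝ := ∑ i, ∑ v ∈ (U i)ᶜ, r i v with hPdef
  have stepA : P = (1-ζ) * (1 / (Fintype.card ι : ℝ)) *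
      ∑ h ∈ H, (lo h : ℝ) * ∑ l, r l (h l) / (deg l (h l) : ℝ) := by
    have hPi : ∀ i, ∑ v ∈ (U i)ᶜ, r i v
        = (1-ζ) * ∑ h ∈ H, (if h i ∈ (U i)ᶜ then
            (1 / (Fintype.card ι : ℝ)) * ∑ l, r l (h l) / (deg l (h l) : ℝ) else 0) := by
      intro i
      calc ∑ v ∈ (U i)ᶜ, r i v
          = ∑ v ∈ (U i)ᶜ, ((1 - ζ) * ∑ h ∈ H.filter (fun h => h i = v),
              (1 / (Fintype.card ι : ℝ)) * ∑ l, r l (h l) / (deg l (h l) : ℝ) + ζ * s i v) :=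
            Finset.sum_congr rfl fun v _ => hr i v
        _ = ∑ v ∈ (U i)ᶜ, (1 - ζ) * ∑ h ∈ H.filter (fun h => h i = v),
              (1 / (Fintype.card ι : ℝ)) * ∑ l, r l (h l) / (deg l (h l) : ℝ) := by
            refine Finset.sum_congr rfl fun v hv => ?_
            have : s i v = 0 := by
              rw [hs]; rw [Finset.mem_compl] at hv; simp [hv]
            rw [this, mul_zero, add_zero]
        _ = (1-ζ) * ∑ v ∈ (U i)ᶜ, ∑ h ∈ H.filter (fun h => h i = v),
              (1 / (Fintype.card ι : ℝ)) * ∑ l, r l (h l) / (deg l (h l) : ℝ) := by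
            rw [Finset.mul_sum]
        _ = (1-ζ) * ∑ h ∈ H, (if h i ∈ (U i)ᶜ then
              (1 / (Fintype.card ι : ℝ)) * ∑ l, r l (h l) / (deg l (h l) : ℝ) else 0) := by
            rw [fiber]
    calc P = ∑ i, (1-ζ) * ∑ h ∈ H, (if h i ∈ (U i)ᶜ then
            (1 / (Fintype.card ι : ℝ)) * ∑ l, r l (h l) / (deg l (h l) : ℝ) else 0) := by
          rw [hPdef]; exact Finset.sum_congr rfl fun i _ => hPi i
      _ = (1-ζ) * ∑ h ∈ H, ∑ i, (if h i ∈ (U i)ᶜ then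
            (1 / (Fintype.card ι : ℝ)) * ∑ l, r l (h l) / (deg l (h l) : ℝ) else 0) := by
          rw [← Finset.mul_sum, Finset.sum_comm]
      _ = (1-ζ) * ∑ h ∈ H, (lo h : ℝ) *
            ((1 / (Fintype.card ι : ℝ)) * ∑ l, r l (h l) / (deg l (h l) : ℝ)) := by
          congr 1
          refine Finset.sum_congr rfl fun h _ => ?_
          rw [← Finset.sum_filter, Finset.sum_const, nsmul_eq_mul]
          congr 1
          rw [← hcard_lo h]
          simp [Finset.mem_compl]
      _ = (1-ζ) * (1 / (Fintype.card ι : ℝ)) *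
            ∑ h ∈ H, (lo h : ℝ) * ∑ l, r l (h l) / (deg l (h l) : ℝ) := by
          rw [mul_assoc]
          congr 1
          rw [Finset.mul_sum]
          exact Finset.sum_congr rfl fun h _ => by ring
  -- Step C : the "outside" part of the sums recovers P
  have stepC : ∑ h ∈ H, ∑ l ∈ Finset.univ.filter (fun l => ¬ (h l ∈ U l)),
      r l (h l) / (deg l (h l) : ℝ) = P := by
    simp_rw [Finset.sum_filter]
    rw [Finset.sum_comm, hPdef]
    refine Finset.sum_congr rfl fun l _ => ?_
    have hfib := fiber l ((U l)ᶜ) (fun h => r l (h l) / (deg l (h l) : ℝ))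
    have hinner : ∀ v ∈ (U l)ᶜ, ∑ h ∈ H.filter (fun h => h l = v),
        r l (h l) / (deg l (h l) : ℝ) = r l v := by
      intro v _
      calc ∑ h ∈ H.filter (fun h => h l = v), r l (h l) / (deg l (h l) : ℝ)
          = ∑ h ∈ H.filter (fun h => h l = v), r l v / (deg l v : ℝ) := by
            refine Finset.sum_congr rfl fun h hh => ?_
            rw [Finset.mem_filter] at hh
            rw [hh.2]
        _ = ((H.filter (fun h => h l = v)).card : ℝ) * (r l v / (deg l v : ℝ)) := by
            rw [Finset.sum_const, nsmul_eq_mul]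
        _ = r l v := by
            rw [← hdeg l v, mul_comm, div_mul_cancel₀ _ (ne_of_gt (hdegpos l v))]
    calc ∑ h ∈ H, (if ¬ (h l ∈ U l) then r l (h l) / (deg l (h l) : ℝ) else 0)
        = ∑ h ∈ H, (if h l ∈ (U l)ᶜ then r l (h l) / (deg l (h l) : ℝ) else 0) := by
          refine Finset.sum_congr rfl fun h _ => ?_
          simp only [Finset.mem_compl]
      _ = ∑ v ∈ (U l)ᶜ, ∑ h ∈ H.filter (fun h => h l = v), r l (h l) / (deg l (h l) : ℝ) :=
          hfib.symm
      _ = ∑ v ∈ (U l)ᶜ, r l v := Finset.sum_congr rfl hinner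
  -- Step B : per-edge bound
  have stepB : ∀ h ∈ H, (lo h : ℝ) * ∑ l, r l (h l) / (deg l (h l) : ℝ)
      ≤ (lo h : ℝ) * ((ln h : ℝ) * (1 / mV))
        + (Fintype.card ι : ℝ) * ∑ l ∈ Finset.univ.filter (fun l => ¬ (h l ∈ U l)),
            r l (h l) / (deg l (h l) : ℝ) := by
    intro h _
    have hsplit : ∑ l, r l (h l) / (deg l (h l) : ℝ)
        = ∑ l ∈ Finset.univ.filter (fun l => h l ∈ U l), r l (h l) / (deg l (h l) : ℝ)
          + ∑ l ∈ Finset.univ.filter (fun l => ¬ (h l ∈ U l)),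
              r l (h l) / (deg l (h l) : ℝ) :=
      (Finset.sum_filter_add_sum_filter_not _ _ _).symm
    have hlo_nonneg : (0:ℝ) ≤ (lo h : ℝ) := Nat.cast_nonneg _
    have hlo_le : (lo h : ℝ) ≤ (Fintype.card ι : ℝ) := by
      have : lo h ≤ Fintype.card ι := by rw [hlo]; omega
      exact_mod_cast this
    have hout_nonneg : (0:ℝ) ≤ ∑ l ∈ Finset.univ.filter (fun l => ¬ (h l ∈ U l)),
        r l (h l) / (deg l (h l) : ℝ) :=
      Finset.sum_nonneg fun l _ => div_nonneg (hr0 _ _) (hdegpos _ _).le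
    have hin_le : ∑ l ∈ Finset.univ.filter (fun l => h l ∈ U l),
        r l (h l) / (deg l (h l) : ℝ) ≤ (ln h : ℝ) * (1 / mV) := by
      calc ∑ l ∈ Finset.univ.filter (fun l => h l ∈ U l), r l (h l) / (deg l (h l) : ℝ)
          ≤ ∑ _l ∈ Finset.univ.filter (fun l => h l ∈ U l), (1 / mV) :=
            Finset.sum_le_sum fun l _ => hkey l (h l)
        _ = ((Finset.univ.filter (fun l => h l ∈ U l)).card : ℝ) * (1 / mV) := by
            rw [Finset.sum_const, nsmul_eq_mul]
        _ = (ln h : ℝ) * (1 / mV) := by rw [hln]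
    calc (lo h : ℝ) * ∑ l, r l (h l) / (deg l (h l) : ℝ)
        = (lo h : ℝ) * ∑ l ∈ Finset.univ.filter (fun l => h l ∈ U l),
            r l (h l) / (deg l (h l) : ℝ)
          + (lo h : ℝ) * ∑ l ∈ Finset.univ.filter (fun l => ¬ (h l ∈ U l)),
              r l (h l) / (deg l (h l) : ℝ) := by rw [hsplit, mul_add]
      _ ≤ (lo h : ℝ) * ((ln h : ℝ) * (1 / mV))
          + (Fintype.card ι : ℝ) * ∑ l ∈ Finset.univ.filter (fun l => ¬ (h l ∈ U l)),
              r l (h l) / (deg l (h l) : ℝ) :=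
        add_le_add (mul_le_mul_of_nonneg_left hin_le hlo_nonneg)
          (mul_le_mul_of_nonneg_right hlo_le hout_nonneg)
  -- combine
  have hmain : P ≤ (1-ζ) * (bU / mV) + (1-ζ) * P := by
    have hsum_le : ∑ h ∈ H, (lo h : ℝ) * ∑ l, r l (h l) / (deg l (h l) : ℝ)
        ≤ ∑ h ∈ H, ((lo h : ℝ) * ((ln h : ℝ) * (1 / mV))
          + (Fintype.card ι : ℝ) * ∑ l ∈ Finset.univ.filter (fun l => ¬ (h l ∈ U l)),
              r l (h l) / (deg l (h l) : ℝ)) := Finset.sum_le_sum stepB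
    have hfactor : (0:ℝ) ≤ (1-ζ) * (1 / (Fintype.card ι : ℝ)) := by positivity
    have h7 : P ≤ (1-ζ) * (1 / (Fintype.card ι : ℝ)) *
        ∑ h ∈ H, ((lo h : ℝ) * ((ln h : ℝ) * (1 / mV))
          + (Fintype.card ι : ℝ) * ∑ l ∈ Finset.univ.filter (fun l => ¬ (h l ∈ U l)),
              r l (h l) / (deg l (h l) : ℝ)) := by
      rw [stepA]
      exact mul_le_mul_of_nonneg_left hsum_le hfactor
    have h8 : (1-ζ) * (1 / (Fintype.card ι : ℝ)) *
        ∑ h ∈ H, ((lo h : ℝ) * ((ln h : ℝ) * (1 / mV))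
          + (Fintype.card ι : ℝ) * ∑ l ∈ Finset.univ.filter (fun l => ¬ (h l ∈ U l)),
              r l (h l) / (deg l (h l) : ℝ))
        = (1-ζ) * (bU / mV) + (1-ζ) * P := by
      have hMne : (Fintype.card ι : ℝ) ≠ 0 := ne_of_gt hM0
      have e1 : (1-ζ) * (1 / (Fintype.card ι : ℝ)) *
          ∑ h ∈ H, (lo h : ℝ) * ((ln h : ℝ) * (1 / mV)) = (1-ζ) * (bU / mV) := by
        rw [hbU]
        simp only [Finset.mul_sum, Finset.sum_div]
        refine Finset.sum_congr rfl fun h _ => ?_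
        ring
      have e2 : (1-ζ) * (1 / (Fintype.card ι : ℝ)) * ((Fintype.card ι : ℝ) * P)
          = (1-ζ) * P := by
        rw [mul_assoc]
        congr 1
        rw [← mul_assoc, one_div, inv_mul_cancel₀ hMne, one_mul]
      rw [Finset.sum_add_distrib, ← Finset.mul_sum, stepC, mul_add, e1, e2]
    linarith [h7, h8.le, h8.ge]
  have hfinal : (1 - ζ) * bU / mV = (1-ζ) * (bU / mV) := mul_div_assoc _ _ _
  rw [hfinal]
  linarith
end

section
/- For the preferential personalized MuMoRank with a common damping factor ζ, the total rank outside the preferred sets satisfies ζ·(Σ_{i=1}^M p_{i,o}) ≤ (1−ζ)·[ Σ_{h∈H} (l_o(h)/M)·Σ_{l : h(l)∈U^(l)} ζ/Vol(U^(l)) + ((1−ζ)·(1/M)·Σ_{m=1}^M 1/Vol(U^(m)))·Σ_{h∈H} l_o(h)·l_n(h)/M ], where p_{i,o} = Σ_{j∈N_i∖U^(i)} r_j, l_n(h) = |{l : h(l) ∈ U^(l)}| and l_o(h) = M − l_n(h). -/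
open Finset

/-- For the preferential personalized MuMoRank with common damping
factor `ζ`, the total rank outside the preferred sets satisfies
`ζ·(Σ_i p_{i,o}) ≤ (1−ζ)·[ Σ_{h∈H} (l_o(h)/M)·Σ_{l : h(l)∈U^(l)} ζ/Vol(U^(l))
  + ((1−ζ)·(1/M)·Σ_m 1/Vol(U^(m)))·Σ_{h∈H} l_o(h)·l_n(h)/M ]`. -/
theorem mumorank_refined_outflow_bound_common_zeta
    {ι : Type*} [Fintype ι] [Nonempty ι] [DecidableEq ι]
    (N : ι → Type*) [∀ i, Fintype (N i)] [∀ i, Nonempty (N i)] [∀ i, DecidableEq (N i)]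
    (H : Finset (∀ i, N i)) (hH : H.Nonempty)
    (deg : ∀ i, N i → ℕ)
    (hdeg : ∀ i (v : N i), deg i v = (H.filter (fun h => h i = v)).card)
    (hcover : ∀ i (v : N i), 0 < deg i v)
    (ζ : ℝ) (hζ : ζ ∈ Set.Ioo (0 : ℝ) 1)
    (U : ∀ i, Finset (N i)) (hU : ∀ i, (U i).Nonempty)
    (Vol : ι → ℝ) (hVol : ∀ i, Vol i = ∑ v ∈ U i, (deg i v : ℝ))
    (s : ∀ i, N i → ℝ)
    (hs : ∀ i (v : N i), s i v = if v ∈ U i then (deg i v : ℝ) / Vol i else 0)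
    (r : ∀ i, N i → ℝ)
    (hr0 : ∀ i (v : N i), 0 ≤ r i v)
    (hr1 : ∀ i, ∑ v, r i v = 1)
    (hr : ∀ i (v : N i), r i v =
      (1 - ζ) * ∑ h ∈ H.filter (fun h => h i = v),
        (1 / (Fintype.card ι : ℝ)) * ∑ l, r l (h l) / (deg l (h l) : ℝ)
      + ζ * s i v)
    (ln lo : (∀ i, N i) → ℕ)
    (hln : ∀ h, ln h = (Finset.univ.filter (fun l => h l ∈ U l)).card)
    (hlo : ∀ h, lo h = Fintype.card ι - ln h) :
    ζ * (∑ i, ∑ v ∈ (U i)ᶜ, r i v) ≤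
      (1 - ζ) *
        ((∑ h ∈ H, ((lo h : ℝ) / (Fintype.card ι : ℝ)) *
            ∑ l ∈ Finset.univ.filter (fun l => h l ∈ U l), ζ / Vol l)
          + ((1 - ζ) * ((1 / (Fintype.card ι : ℝ)) * ∑ m, 1 / Vol m)) *
            ∑ h ∈ H, ((lo h : ℝ) * (ln h : ℝ)) / (Fintype.card ι : ℝ)) := by
  obtain ⟨hζ0, hζ1⟩ := hζ
  have hζ1' : (0:ℝ) ≤ 1 - ζ := by linarith
  set M : ℝ := (Fintype.card ι : ℝ) with hMdef
  have hMpos : (0:ℝ) < M := by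
    rw [hMdef]
    have : 0 < Fintype.card ι := Fintype.card_pos
    exact_mod_cast this
  have hMne : M ≠ 0 := ne_of_gt hMpos
  have hdegpos : ∀ i (v : N i), (0:ℝ) < (deg i v : ℝ) := fun i v => by
    exact_mod_cast hcover i v
  have hVolpos : ∀ i, 0 < Vol i := by
    intro i
    rw [hVol i]
    exact Finset.sum_pos (fun v _ => hdegpos i v) (hU i)
  -- the "outflow per degree" quantities
  set q : ∀ i, N i → ℝ := fun i v => r i v / (deg i v : ℝ) with hqdef
  have hq0 : ∀ i (v : N i), 0 ≤ q i v := fun i v =>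
    div_nonneg (hr0 i v) (hdegpos i v).le
  have hrq : ∀ i (v : N i), (deg i v : ℝ) * q i v = r i v := fun i v => by
    have hd : (deg i v : ℝ) ≠ 0 := (hdegpos i v).ne'
    show (deg i v : ℝ) * (r i v / (deg i v : ℝ)) = r i v
    rw [mul_comm]
    exact div_mul_cancel₀ (r i v) hd
  set F : (∀ i, N i) → ℝ := fun h => ∑ l, q l (h l) with hFdef
  have hF0 : ∀ h, 0 ≤ F h := fun h => Finset.sum_nonneg fun l _ => hq0 l (h l)
  have hcard : ∀ i (v : N i), ((H.filter fun h => h i = v).card : ℝ) = (deg i v : ℝ) :=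
    fun i v => by rw [hdeg]
  -- recursion in terms of F
  have hrF : ∀ i (v : N i),
      r i v = (1 - ζ) * ((1/M) * ∑ h ∈ H.filter (fun h => h i = v), F h) + ζ * s i v := by
    intro i v
    rw [hr i v, ← Finset.mul_sum]
  -- fiberwise summation lemma
  have fiber : ∀ (i : ι) (g : (∀ i, N i) → ℝ),
      ∑ v : N i, ∑ h ∈ H.filter (fun h => h i = v), g h = ∑ h ∈ H, g h := fun i g =>
    Finset.sum_fiberwise_of_maps_to (fun h _ => Finset.mem_univ _) g
  -- cardinality of the "outside" modality set
  have hlo_card : ∀ h, (Finset.univ.filter (fun l => h l ∉ U l)).card = lo h := by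
    intro h
    have h1 := Finset.card_filter_add_card_filter_not
      (s := (Finset.univ : Finset ι)) (p := fun l => h l ∈ U l)
    rw [hlo h, hln h]
    rw [Finset.card_univ] at h1
    omega
  have hlo_le : ∀ h, (lo h : ℝ) ≤ M := by
    intro h
    rw [hMdef]
    have : lo h ≤ Fintype.card ι := by rw [hlo h]; omega
    exact_mod_cast this
  -- Step 1 : the maxima x i of q i satisfy a contraction-type bound
  obtain ⟨x, hxle, hxatt⟩ :
      ∃ x : ι → ℝ, (∀ i (v : N i), q i v ≤ x i) ∧ (∀ i, ∃ v : N i, x i = q i v) := by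
    refine ⟨fun i => Finset.univ.sup' Finset.univ_nonempty (q i), ?_, ?_⟩
    · exact fun i v => Finset.le_sup' (q i) (Finset.mem_univ v)
    · intro i
      obtain ⟨v, _, hv⟩ := Finset.exists_mem_eq_sup' Finset.univ_nonempty (q i)
      exact ⟨v, hv⟩
  have hxrec : ∀ i, x i ≤ (1 - ζ) * ((1/M) * ∑ m, x m) + ζ / Vol i := by
    intro i
    obtain ⟨v, hv⟩ := hxatt i
    rw [hv]
    have h2 : ∑ h ∈ H.filter (fun h => h i = v), F h ≤ (deg i v : ℝ) * ∑ m, x m := by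
      calc ∑ h ∈ H.filter (fun h => h i = v), F h
          ≤ ∑ _h ∈ H.filter (fun h => h i = v), ∑ m, x m :=
            Finset.sum_le_sum fun h _ => Finset.sum_le_sum fun l _ => hxle l (h l)
        _ = ((H.filter (fun h => h i = v)).card : ℝ) * ∑ m, x m := by
            rw [Finset.sum_const, nsmul_eq_mul]
        _ = (deg i v : ℝ) * ∑ m, x m := by rw [hcard]
    have h3 : s i v ≤ (deg i v : ℝ) / Vol i := by
      rw [hs i v]
      split
      · exact le_rfl
      · exact div_nonneg (hdegpos i v).le (hVolpos i).le
    have hxsum0 : 0 ≤ ∑ m, x m := by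
      refine Finset.sum_nonneg fun m _ => ?_
      obtain ⟨w, hw⟩ := hxatt m
      rw [hw]; exact hq0 m w
    have h1 : r i v ≤ (deg i v : ℝ) * ((1 - ζ) * ((1/M) * ∑ m, x m) + ζ / Vol i) := by
      rw [hrF i v]
      have e1 : (1 - ζ) * ((1/M) * ∑ h ∈ H.filter (fun h => h i = v), F h)
          ≤ (1 - ζ) * ((1/M) * ((deg i v : ℝ) * ∑ m, x m)) := by
        apply mul_le_mul_of_nonneg_left _ hζ1'
        apply mul_le_mul_of_nonneg_left h2
        positivity
      have e2 : ζ * s i v ≤ ζ * ((deg i v : ℝ) / Vol i) :=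
        mul_le_mul_of_nonneg_left h3 hζ0.le
      calc (1 - ζ) * ((1/M) * ∑ h ∈ H.filter (fun h => h i = v), F h) + ζ * s i v
          ≤ (1 - ζ) * ((1/M) * ((deg i v : ℝ) * ∑ m, x m)) + ζ * ((deg i v : ℝ) / Vol i) := by
            exact add_le_add e1 e2
        _ = (deg i v : ℝ) * ((1 - ζ) * ((1/M) * ∑ m, x m) + ζ / Vol i) := by
            ring
    have : q i v = r i v / (deg i v : ℝ) := rfl
    rw [this, div_le_iff₀ (hdegpos i v)]
    calc r i v ≤ (deg i v : ℝ) * ((1 - ζ) * ((1/M) * ∑ m, x m) + ζ / Vol i) := h1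
      _ = ((1 - ζ) * ((1/M) * ∑ m, x m) + ζ / Vol i) * (deg i v : ℝ) := by ring
  -- Step 2 : Σ x ≤ Σ 1/Vol
  have hxsum : ∑ m, x m ≤ ∑ m, 1 / Vol m := by
    have hsum := Finset.sum_le_sum fun i (_ : i ∈ Finset.univ) => hxrec i
    rw [Finset.sum_add_distrib, Finset.sum_const, Finset.card_univ, nsmul_eq_mul] at hsum
    have e1 : (Fintype.card ι : ℝ) * ((1 - ζ) * ((1/M) * ∑ m, x m)) = (1 - ζ) * ∑ m, x m := by
      rw [← hMdef]; field_simp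
    have e2 : ∑ i, ζ / Vol i = ζ * ∑ m, 1 / Vol m := by
      rw [Finset.mul_sum]
      exact Finset.sum_congr rfl fun i _ => by rw [mul_one_div]
    rw [e1, e2] at hsum
    have hz : ζ * ∑ m, x m ≤ ζ * ∑ m, 1 / Vol m := by linarith
    exact le_of_mul_le_mul_left hz hζ0
  -- Step 3 : the pointwise bound on q over preferred nodes
  set C : ℝ := (1 - ζ) * ((1/M) * ∑ m, 1 / Vol m) with hCdef
  have hstar : ∀ i (v : N i), q i v ≤ ζ / Vol i + C := by
    intro i v
    have h1 : q i v ≤ (1 - ζ) * ((1/M) * ∑ m, x m) + ζ / Vol i :=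
      le_trans (hxle i v) (hxrec i)
    have h2 : (1 - ζ) * ((1/M) * ∑ m, x m) ≤ C := by
      rw [hCdef]
      apply mul_le_mul_of_nonneg_left _ hζ1'
      apply mul_le_mul_of_nonneg_left hxsum
      positivity
    linarith
  -- Step 4 : the outflow identity  po = (1-ζ)·(1/M)·Σ_h lo(h)·F(h)
  set po : ℝ := ∑ i, ∑ v ∈ (U i)ᶜ, r i v with hpodef
  have hpo : po = (1 - ζ) * ((1/M) * ∑ h ∈ H, (lo h : ℝ) * F h) := by
    have step1 : ∀ i : ι, ∑ v ∈ (U i)ᶜ, r i v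
        = (1 - ζ) * ((1/M) * ∑ h ∈ H, (if h i ∉ U i then F h else 0)) := by
      intro i
      have e0 : ∀ v ∈ (U i)ᶜ, r i v
          = (1 - ζ) * ((1/M) * ∑ h ∈ H.filter (fun h => h i = v), F h) := by
        intro v hv
        rw [hrF i v, hs i v, if_neg (Finset.mem_compl.1 hv), mul_zero, add_zero]
      rw [Finset.sum_congr rfl e0, ← Finset.mul_sum, ← Finset.mul_sum]
      congr 1
      congr 1
      calc ∑ v ∈ (U i)ᶜ, ∑ h ∈ H.filter (fun h => h i = v), F h
          = ∑ v ∈ (U i)ᶜ, ∑ h ∈ H, (if h i = v then F h else 0) := by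
            exact Finset.sum_congr rfl fun v _ => Finset.sum_filter _ _
        _ = ∑ h ∈ H, ∑ v ∈ (U i)ᶜ, (if h i = v then F h else 0) := Finset.sum_comm
        _ = ∑ h ∈ H, (if h i ∈ (U i)ᶜ then F h else 0) := by
            exact Finset.sum_congr rfl fun h _ => Finset.sum_ite_eq ((U i)ᶜ) (h i) (fun _ => F h)
        _ = ∑ h ∈ H, (if h i ∉ U i then F h else 0) := by
            refine Finset.sum_congr rfl fun h _ => ?_
            simp [Finset.mem_compl]
    calc po = ∑ i, (1 - ζ) * ((1/M) * ∑ h ∈ H, (if h i ∉ U i then F h else 0)) :=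
          Finset.sum_congr rfl fun i _ => step1 i
      _ = (1 - ζ) * ((1/M) * ∑ i, ∑ h ∈ H, (if h i ∉ U i then F h else 0)) := by
          rw [← Finset.mul_sum, ← Finset.mul_sum]
      _ = (1 - ζ) * ((1/M) * ∑ h ∈ H, ∑ i, (if h i ∉ U i then F h else 0)) := by
          rw [Finset.sum_comm]
      _ = (1 - ζ) * ((1/M) * ∑ h ∈ H, (lo h : ℝ) * F h) := by
          congr 1
          congr 1
          refine Finset.sum_congr rfl fun h _ => ?_
          rw [← Finset.sum_filter, Finset.sum_const, nsmul_eq_mul, hlo_card h]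
    -- Step 5 : the outside part feeds back into po
  have hFout : ∑ h ∈ H, ∑ l ∈ Finset.univ.filter (fun l => h l ∉ U l), q l (h l) = po := by
    have per_l : ∀ l : ι, ∑ h ∈ H, (if h l ∉ U l then q l (h l) else 0)
        = ∑ v ∈ (U l)ᶜ, r l v := by
      intro l
      rw [← fiber l (fun h => if h l ∉ U l then q l (h l) else 0)]
      have e1 : ∀ v : N l, ∑ h ∈ H.filter (fun h => h l = v),
          (if h l ∉ U l then q l (h l) else 0) = (if v ∉ U l then r l v else 0) := by
        intro v
        have e2 : ∀ h ∈ H.filter (fun h => h l = v),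
            (if h l ∉ U l then q l (h l) else 0) = (if v ∉ U l then q l v else 0) := by
          intro h hh
          have hv : h l = v := (Finset.mem_filter.1 hh).2
          rw [hv]
        rw [Finset.sum_congr rfl e2, Finset.sum_const, nsmul_eq_mul, hcard]
        by_cases hv : v ∉ U l
        · rw [if_pos hv, if_pos hv, hrq]
        · rw [if_neg hv, if_neg hv, mul_zero]
      rw [Finset.sum_congr rfl fun v _ => e1 v]
      rw [show (U l)ᶜ = Finset.univ.filter (fun v => v ∉ U l) from by ext v; simp,
        Finset.sum_filter]
    calc ∑ h ∈ H, ∑ l ∈ Finset.univ.filter (fun l => h l ∉ U l), q l (h l)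
        = ∑ h ∈ H, ∑ l : ι, (if h l ∉ U l then q l (h l) else 0) :=
          Finset.sum_congr rfl fun h _ => Finset.sum_filter _ _
      _ = ∑ l : ι, ∑ h ∈ H, (if h l ∉ U l then q l (h l) else 0) := Finset.sum_comm
      _ = ∑ l, ∑ v ∈ (U l)ᶜ, r l v := Finset.sum_congr rfl fun l _ => per_l l
      _ = po := rfl
  -- Step 6 : assemble the bounds
  set S1 : ℝ := ∑ h ∈ H, (lo h : ℝ) * ∑ l ∈ Finset.univ.filter (fun l => h l ∈ U l), ζ / Vol l
    with hS1def
  set S2 : ℝ := ∑ h ∈ H, (lo h : ℝ) * (ln h : ℝ) with hS2def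
  have hC0 : 0 ≤ C := by
    rw [hCdef]
    have h1 : 0 ≤ ∑ m, 1 / Vol m :=
      Finset.sum_nonneg fun m _ => one_div_nonneg.2 (hVolpos m).le
    have h2 : (0:ℝ) ≤ 1/M := by positivity
    exact mul_nonneg hζ1' (mul_nonneg h2 h1)
  have hsplit : ∀ h, F h = (∑ l ∈ Finset.univ.filter (fun l => h l ∈ U l), q l (h l))
      + ∑ l ∈ Finset.univ.filter (fun l => h l ∉ U l), q l (h l) := fun h =>
    (Finset.sum_filter_add_sum_filter_not Finset.univ _ _).symm
  have hbound : ∑ h ∈ H, (lo h : ℝ) * F h ≤ S1 + C * S2 + M * po := by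
    have hin : ∀ h ∈ H, (lo h : ℝ) * ∑ l ∈ Finset.univ.filter (fun l => h l ∈ U l), q l (h l)
        ≤ (lo h : ℝ) * ((∑ l ∈ Finset.univ.filter (fun l => h l ∈ U l), ζ / Vol l)
            + (ln h : ℝ) * C) := by
      intro h _
      apply mul_le_mul_of_nonneg_left _ (Nat.cast_nonneg _)
      calc ∑ l ∈ Finset.univ.filter (fun l => h l ∈ U l), q l (h l)
          ≤ ∑ l ∈ Finset.univ.filter (fun l => h l ∈ U l), (ζ / Vol l + C) :=
            Finset.sum_le_sum fun l _ => hstar l (h l)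
        _ = (∑ l ∈ Finset.univ.filter (fun l => h l ∈ U l), ζ / Vol l)
            + ((Finset.univ.filter (fun l => h l ∈ U l)).card : ℝ) * C := by
            rw [Finset.sum_add_distrib, Finset.sum_const, nsmul_eq_mul]
        _ = (∑ l ∈ Finset.univ.filter (fun l => h l ∈ U l), ζ / Vol l)
            + (ln h : ℝ) * C := by rw [hln h]
    have hout : ∀ h ∈ H, (lo h : ℝ) * ∑ l ∈ Finset.univ.filter (fun l => h l ∉ U l), q l (h l)
        ≤ M * ∑ l ∈ Finset.univ.filter (fun l => h l ∉ U l), q l (h l) := by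
      intro h _
      apply mul_le_mul_of_nonneg_right (hlo_le h)
      exact Finset.sum_nonneg fun l _ => hq0 l (h l)
    calc ∑ h ∈ H, (lo h : ℝ) * F h
        = ∑ h ∈ H, ((lo h : ℝ) * ∑ l ∈ Finset.univ.filter (fun l => h l ∈ U l), q l (h l)
            + (lo h : ℝ) * ∑ l ∈ Finset.univ.filter (fun l => h l ∉ U l), q l (h l)) := by
          refine Finset.sum_congr rfl fun h _ => ?_
          rw [hsplit h, mul_add]
      _ = (∑ h ∈ H, (lo h : ℝ) * ∑ l ∈ Finset.univ.filter (fun l => h l ∈ U l), q l (h l))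
          + ∑ h ∈ H, (lo h : ℝ) * ∑ l ∈ Finset.univ.filter (fun l => h l ∉ U l), q l (h l) :=
          Finset.sum_add_distrib
      _ ≤ (∑ h ∈ H, (lo h : ℝ) * ((∑ l ∈ Finset.univ.filter (fun l => h l ∈ U l), ζ / Vol l)
              + (ln h : ℝ) * C))
          + ∑ h ∈ H, M * ∑ l ∈ Finset.univ.filter (fun l => h l ∉ U l), q l (h l) :=
          add_le_add (Finset.sum_le_sum hin) (Finset.sum_le_sum hout)
      _ = S1 + C * S2 + M * po := by
          rw [← Finset.mul_sum, hFout]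
          congr 1
          rw [hS1def, hS2def, Finset.mul_sum, ← Finset.sum_add_distrib]
          exact Finset.sum_congr rfl fun h _ => by ring
  have hkey : ζ * po ≤ (1 - ζ) * ((1/M) * (S1 + C * S2)) := by
    have h1 : po ≤ (1 - ζ) * ((1/M) * (S1 + C * S2 + M * po)) := by
      calc po = (1 - ζ) * ((1/M) * ∑ h ∈ H, (lo h : ℝ) * F h) := hpo
        _ ≤ (1 - ζ) * ((1/M) * (S1 + C * S2 + M * po)) := by
            apply mul_le_mul_of_nonneg_left _ hζ1'
            apply mul_le_mul_of_nonneg_left hbound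
            positivity
    have h2 : (1 - ζ) * ((1/M) * (S1 + C * S2 + M * po))
        = (1 - ζ) * ((1/M) * (S1 + C * S2)) + (1 - ζ) * po := by
      field_simp
    linarith
  -- Step 7 : rewrite the goal in terms of S1 and S2
  have g1 : ∑ h ∈ H, ((lo h : ℝ) / M) * ∑ l ∈ Finset.univ.filter (fun l => h l ∈ U l), ζ / Vol l
      = (1/M) * S1 := by
    rw [hS1def, Finset.mul_sum]
    exact Finset.sum_congr rfl fun h _ => by ring
  have g2 : ∑ h ∈ H, ((lo h : ℝ) * (ln h : ℝ)) / M = (1/M) * S2 := by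
    rw [hS2def, Finset.mul_sum]
    exact Finset.sum_congr rfl fun h _ => by ring
  rw [g1, g2]
  calc ζ * po ≤ (1 - ζ) * ((1/M) * (S1 + C * S2)) := hkey
    _ = (1 - ζ) * ((1/M) * S1 + C * ((1/M) * S2)) := by ring
end

section
/- With modality-dependent damping factors, setting d_0 = (1/M)·Σ_{l=1}^M (1−ζ^(l))/Vol(U^(l)) and d^(i) = d_0 + ζ̄/Vol(U^(i)) for each modality i, where ζ̄ = (1/M)·Σ_{l=1}^M ζ^(l), the system of per-modality fixed-point inequalities holds for every i: (1/M)·Σ_{l=1}^M d^(l)·(1−ζ^(l)) + ζ̄/Vol(U^(i)) ≤ d^(i). -/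
open Finset

/-- With modality-dependent damping factors, setting
`d_0 = (1/M)·Σ_l (1−ζ^(l))/Vol(U^(l))` and `d^(i) = d_0 + ζ̄/Vol(U^(i))`, where
`ζ̄ = (1/M)·Σ_l ζ^(l)`, the system of per-modality fixed-point inequalities holds for
every `i`: `(1/M)·Σ_l d^(l)·(1−ζ^(l)) + ζ̄/Vol(U^(i)) ≤ d^(i)`. -/
theorem mumorank_d0_varying_zeta
    {ι : Type*} [Fintype ι] [Nonempty ι] [DecidableEq ι]
    (N : ι → Type*) [∀ i, Fintype (N i)] [∀ i, Nonempty (N i)] [∀ i, DecidableEq (N i)]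
    (H : Finset (∀ i, N i)) (hH : H.Nonempty)
    (deg : ∀ i, N i → ℕ)
    (hdeg : ∀ i (v : N i), deg i v = (H.filter (fun h => h i = v)).card)
    (hcover : ∀ i (v : N i), 0 < deg i v)
    (ζ : ι → ℝ) (hζ : ∀ i, ζ i ∈ Set.Ioo (0 : ℝ) 1)
    (ζbar : ℝ) (hζbar : ζbar = (1 / (Fintype.card ι : ℝ)) * ∑ l, ζ l)
    (U : ∀ i, Finset (N i)) (hU : ∀ i, (U i).Nonempty)
    (Vol : ι → ℝ) (hVol : ∀ i, Vol i = ∑ v ∈ U i, (deg i v : ℝ))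
    (d0 : ℝ)
    (hd0 : d0 = (1 / (Fintype.card ι : ℝ)) * ∑ l, (1 - ζ l) / Vol l)
    (d : ι → ℝ)
    (hd : ∀ i, d i = d0 + ζbar / Vol i) :
    ∀ i, (1 / (Fintype.card ι : ℝ)) * (∑ l, d l * (1 - ζ l)) + ζbar / Vol i ≤ d i := by
  intro i
  set M : ℝ := (Fintype.card ι : ℝ) with hMdef
  have hMpos : (0 : ℝ) < M := by
    rw [hMdef]; exact_mod_cast (Fintype.card_pos : 0 < Fintype.card ι)
  have hMne : M ≠ 0 := ne_of_gt hMpos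
  have h1 : ∑ l, (1 - ζ l) / Vol l = M * d0 := by
    rw [hd0]; field_simp
  have h2 : ∑ l, ζ l = M * ζbar := by
    rw [hζbar]; field_simp
  have h3 : ∑ l, (1 - ζ l) = M - M * ζbar := by
    rw [Finset.sum_sub_distrib, h2, Finset.sum_const, Finset.card_univ]
    simp [hMdef, mul_comm]
  have key : ∑ l, d l * (1 - ζ l) = M * d0 := by
    have : ∑ l, d l * (1 - ζ l)
        = d0 * ∑ l, (1 - ζ l) + ζbar * ∑ l, (1 - ζ l) / Vol l := by
      rw [Finset.mul_sum, Finset.mul_sum, ← Finset.sum_add_distrib]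
      refine Finset.sum_congr rfl fun l _ => ?_
      rw [hd l]; ring
    rw [this, h1, h3]; ring
  rw [key, hd i]
  have : 1 / M * (M * d0) = d0 := by field_simp
  rw [this]
end

section
/- For the preferential personalized MuMoRank with modality-dependent damping factors ζ^(1),…,ζ^(M), the damping-weighted total rank outside the preferred sets satisfies Σ_{i=1}^M ζ^(i)·p_{i,o} ≤ Σ_{h∈H} (l_o(h)/M)·Σ_{l : h(l)∈U^(l)} (1−ζ^(l))·( ζ̄/Vol(U^(l)) + (1/M)·Σ_{m=1}^M (1−ζ^(m))/Vol(U^(m)) ), where p_{i,o} = Σ_{j∈N_i∖U^(i)} r_j, ζ̄ = (1/M)·Σ_{l=1}^M ζ^(l), and l_o(h) = M − |{l : h(l) ∈ U^(l)}|. -/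
open Finset

/-- For the preferential personalized MuMoRank with modality-dependent
damping factors, the damping-weighted total rank outside the preferred sets satisfies
`Σ_i ζ^(i)·p_{i,o} ≤ Σ_{h∈H} (l_o(h)/M)·Σ_{l : h(l)∈U^(l)} (1−ζ^(l))·
  ( ζ̄/Vol(U^(l)) + (1/M)·Σ_m (1−ζ^(m))/Vol(U^(m)) )`. -/
theorem mumorank_refined_outflow_bound_varying_zeta
    {ι : Type*} [Fintype ι] [Nonempty ι] [DecidableEq ι]
    (N : ι → Type*) [∀ i, Fintype (N i)] [∀ i, Nonempty (N i)] [∀ i, DecidableEq (N i)]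
    (H : Finset (∀ i, N i)) (hH : H.Nonempty)
    (deg : ∀ i, N i → ℕ)
    (hdeg : ∀ i (v : N i), deg i v = (H.filter (fun h => h i = v)).card)
    (hcover : ∀ i (v : N i), 0 < deg i v)
    (ζ : ι → ℝ) (hζ : ∀ i, ζ i ∈ Set.Ioo (0 : ℝ) 1)
    (ζbar : ℝ) (hζbar : ζbar = (1 / (Fintype.card ι : ℝ)) * ∑ l, ζ l)
    (U : ∀ i, Finset (N i)) (hU : ∀ i, (U i).Nonempty)
    (Vol : ι → ℝ) (hVol : ∀ i, Vol i = ∑ v ∈ U i, (deg i v : ℝ))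
    (s : ∀ i, N i → ℝ)
    (hs : ∀ i (v : N i), s i v = if v ∈ U i then (deg i v : ℝ) / Vol i else 0)
    (r : ∀ i, N i → ℝ)
    (hr0 : ∀ i (v : N i), 0 ≤ r i v)
    (hr1 : ∀ i, ∑ v, r i v = 1)
    (hr : ∀ i (v : N i), r i v =
      (∑ h ∈ H.filter (fun h => h i = v),
        (1 / (Fintype.card ι : ℝ)) * ∑ l, (1 - ζ l) * r l (h l) / (deg l (h l) : ℝ))
      + ζbar * s i v)
    (ln lo : (∀ i, N i) → ℕ)
    (hln : ∀ h, ln h = (Finset.univ.filter (fun l => h l ∈ U l)).card)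
    (hlo : ∀ h, lo h = Fintype.card ι - ln h) :
    (∑ i, ζ i * ∑ v ∈ (U i)ᶜ, r i v) ≤
      ∑ h ∈ H, ((lo h : ℝ) / (Fintype.card ι : ℝ)) *
        ∑ l ∈ Finset.univ.filter (fun l => h l ∈ U l),
          (1 - ζ l) * (ζbar / Vol l
            + (1 / (Fintype.card ι : ℝ)) * ∑ m, (1 - ζ m) / Vol m) := by
  classical
  have hMpos : (0 : ℝ) < (Fintype.card ι : ℝ) := by
    exact_mod_cast Fintype.card_pos
  have hζ0 : ∀ l, 0 < ζ l := fun l => (hζ l).1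
  have hζ1 : ∀ l, ζ l < 1 := fun l => (hζ l).2
  have h1ζ : ∀ l, (0 : ℝ) ≤ 1 - ζ l := fun l => by linarith [hζ1 l]
  have hdegR : ∀ i (v : N i), (0 : ℝ) < (deg i v : ℝ) := fun i v => by
    exact_mod_cast hcover i v
  have hVolpos : ∀ i, 0 < Vol i := by
    intro i
    rw [hVol]
    exact Finset.sum_pos (fun v _ => hdegR i v) (hU i)
  have hζbarpos : 0 < ζbar := by
    rw [hζbar]
    exact mul_pos (by positivity) (Finset.sum_pos (fun l _ => hζ0 l) univ_nonempty)
  -- the per-hyperedge weight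
  set w : (∀ i, N i) → ℝ :=
    fun h => (1 / (Fintype.card ι : ℝ)) * ∑ l, (1 - ζ l) * r l (h l) / (deg l (h l) : ℝ)
    with hw
  have hterm_nonneg : ∀ (l : ι) (v : N l), 0 ≤ (1 - ζ l) * r l v / (deg l v : ℝ) :=
    fun l v => div_nonneg (mul_nonneg (h1ζ l) (hr0 l v)) (hdegR l v).le
  have hw_nonneg : ∀ h, 0 ≤ w h := fun h =>
    mul_nonneg (by positivity) (Finset.sum_nonneg fun l _ => hterm_nonneg l (h l))
  -- the node-wise bound r v / deg v ≤ ζbar / Vol + A0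
  set c : ι → ℝ := fun i =>
    (Finset.univ : Finset (N i)).sup' Finset.univ_nonempty (fun v => r i v / (deg i v : ℝ))
    with hc
  have hcle : ∀ i (v : N i), r i v / (deg i v : ℝ) ≤ c i := fun i v => by
    simp only [hc]
    exact Finset.le_sup' (fun v => r i v / (deg i v : ℝ)) (mem_univ v)
  set A : ℝ := (1 / (Fintype.card ι : ℝ)) * ∑ l, (1 - ζ l) * c l with hA
  set A0 : ℝ := (1 / (Fintype.card ι : ℝ)) * ∑ m, (1 - ζ m) / Vol m with hA0
  have hwleA : ∀ h, w h ≤ A := by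
    intro h
    rw [hw, hA]
    refine mul_le_mul_of_nonneg_left (Finset.sum_le_sum fun l _ => ?_) (by positivity)
    rw [mul_div_assoc]
    exact mul_le_mul_of_nonneg_left (hcle l (h l)) (h1ζ l)
  have hnode : ∀ i (v : N i), r i v / (deg i v : ℝ) ≤ A + ζbar / Vol i := by
    intro i v
    rw [div_le_iff₀ (hdegR i v)]
    have hsle : s i v ≤ (deg i v : ℝ) / Vol i := by
      rw [hs]
      split_ifs with hvU
      · exact le_refl _
      · exact div_nonneg (hdegR i v).le (hVolpos i).le
    calc r i v = (∑ h ∈ H.filter (fun h => h i = v), w h) + ζbar * s i v := hr i v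
      _ ≤ (∑ _h ∈ H.filter (fun h => h i = v), A) + ζbar * ((deg i v : ℝ) / Vol i) := by
          exact add_le_add (Finset.sum_le_sum fun h _ => hwleA h)
            (mul_le_mul_of_nonneg_left hsle hζbarpos.le)
      _ = (deg i v : ℝ) * A + ζbar * ((deg i v : ℝ) / Vol i) := by
          rw [Finset.sum_const, ← hdeg i v, nsmul_eq_mul]
      _ = (A + ζbar / Vol i) * (deg i v : ℝ) := by ring
  have hcB : ∀ i, c i ≤ A + ζbar / Vol i := by
    intro i
    simp only [hc]
    exact Finset.sup'_le _ _ fun v _ => hnode i v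
  have hAA0 : A ≤ A0 := by
    have h1 : A ≤ (1 / (Fintype.card ι : ℝ)) * ∑ l, (1 - ζ l) * (A + ζbar / Vol l) := by
      rw [hA]
      refine mul_le_mul_of_nonneg_left (Finset.sum_le_sum fun l _ => ?_) (by positivity)
      exact mul_le_mul_of_nonneg_left (hcB l) (h1ζ l)
    have hsum1 : ∑ l, (1 - ζ l) * (A + ζbar / Vol l)
        = ((Fintype.card ι : ℝ) - ∑ l, ζ l) * A + ζbar * ∑ l, (1 - ζ l) / Vol l := by
      rw [Finset.sum_congr rfl (fun l _ => show (1 - ζ l) * (A + ζbar / Vol l)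
          = (1 - ζ l) * A + ζbar * ((1 - ζ l) / Vol l) by ring)]
      rw [Finset.sum_add_distrib, ← Finset.sum_mul, ← Finset.mul_sum,
        Finset.sum_sub_distrib, Finset.sum_const, Finset.card_univ, nsmul_eq_mul, mul_one]
    have h2 : A ≤ (1 - ζbar) * A + ζbar * A0 := by
      have hexp : (1 / (Fintype.card ι : ℝ)) * ∑ l, (1 - ζ l) * (A + ζbar / Vol l)
          = (1 - ζbar) * A + ζbar * A0 := by
        rw [hsum1, hζbar, hA0]
        field_simp
      rw [← hexp]; exact h1
    have h3 : ζbar * A ≤ ζbar * A0 := by nlinarith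
    exact le_of_mul_le_mul_left h3 hζbarpos
  have hB : ∀ (l : ι) (v : N l), r l v / (deg l v : ℝ) ≤ ζbar / Vol l + A0 := by
    intro l v
    have := hnode l v
    linarith [hAA0]
  -- swapping sums over hyperedges and out-modalities
  have hswap : ∀ (F : ι → (∀ i, N i) → ℝ),
      ∑ h ∈ H, ∑ i ∈ univ.filter (fun i => h i ∉ U i), F i h
      = ∑ i, ∑ h ∈ H.filter (fun h => h i ∉ U i), F i h := by
    intro F
    simp only [Finset.sum_filter]
    exact Finset.sum_comm
  -- fiberwise identities for the outside mass
  have hpio : ∀ i, ∑ v ∈ (U i)ᶜ, r i v = ∑ h ∈ H.filter (fun h => h i ∉ U i), w h := by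
    intro i
    have h1 : ∀ v ∈ (U i)ᶜ, r i v = ∑ h ∈ H.filter (fun h => h i = v), w h := by
      intro v hv
      rw [hr i v, hs i v, if_neg (Finset.mem_compl.mp hv), mul_zero, add_zero]
    rw [Finset.sum_congr rfl h1, Finset.sum_fiberwise_eq_sum_filter H ((U i)ᶜ) (fun h => h i) w]
    exact Finset.sum_congr (Finset.filter_congr fun h _ => by simp) fun _ _ => rfl
  have hpio' : ∀ i, ∑ v ∈ (U i)ᶜ, r i v
      = ∑ h ∈ H.filter (fun h => h i ∉ U i), r i (h i) / (deg i (h i) : ℝ) := by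
    intro i
    have h2 : ∑ h ∈ H.filter (fun h => h i ∈ (U i)ᶜ), r i (h i) / (deg i (h i) : ℝ)
        = ∑ v ∈ (U i)ᶜ, ∑ h ∈ H.filter (fun h => h i = v), r i (h i) / (deg i (h i) : ℝ) :=
      (Finset.sum_fiberwise_eq_sum_filter H ((U i)ᶜ) (fun h => h i) _).symm
    have h3 : ∀ v ∈ (U i)ᶜ,
        ∑ h ∈ H.filter (fun h => h i = v), r i (h i) / (deg i (h i) : ℝ) = r i v := by
      intro v _
      rw [Finset.sum_congr rfl (fun h hh => by
        rw [(Finset.mem_filter.mp hh).2]), Finset.sum_const, ← hdeg i v, nsmul_eq_mul,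
        mul_div_cancel₀ _ (hdegR i v).ne']
    calc ∑ v ∈ (U i)ᶜ, r i v
        = ∑ v ∈ (U i)ᶜ, ∑ h ∈ H.filter (fun h => h i = v), r i (h i) / (deg i (h i) : ℝ) :=
          (Finset.sum_congr rfl h3).symm
      _ = ∑ h ∈ H.filter (fun h => h i ∈ (U i)ᶜ), r i (h i) / (deg i (h i) : ℝ) := h2.symm
      _ = ∑ h ∈ H.filter (fun h => h i ∉ U i), r i (h i) / (deg i (h i) : ℝ) :=
          Finset.sum_congr (Finset.filter_congr fun h _ => by simp) fun _ _ => rfl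
  -- cardinality of the out-set
  have hlnle : ∀ h, ln h ≤ Fintype.card ι := by
    intro h
    rw [hln]
    exact (Finset.card_filter_le _ _).trans (by rw [Finset.card_univ])
  have hcardout : ∀ h : (∀ i, N i),
      ((univ.filter (fun l => h l ∉ U l)).card : ℝ) = (lo h : ℝ) := by
    intro h
    have hsplit := Finset.card_filter_add_card_filter_not
      (s := (univ : Finset ι)) (p := fun l => h l ∈ U l)
    rw [Finset.card_univ] at hsplit
    have : (univ.filter (fun l => h l ∉ U l)).card = lo h := by
      rw [hlo, hln]; omega
    rw [this]
  have hloM : ∀ h : (∀ i, N i), (lo h : ℝ) ≤ (Fintype.card ι : ℝ) := by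
    intro h
    have : lo h ≤ Fintype.card ι := by rw [hlo]; omega
    exact_mod_cast this
  -- the main chain
  calc ∑ i, ζ i * ∑ v ∈ (U i)ᶜ, r i v
      = ∑ i, ∑ h ∈ H.filter (fun h => h i ∉ U i), ζ i * w h := by
        exact Finset.sum_congr rfl fun i _ => by rw [hpio i, Finset.mul_sum]
    _ = ∑ h ∈ H, ∑ i ∈ univ.filter (fun i => h i ∉ U i), ζ i * w h :=
        (hswap fun i h => ζ i * w h).symm
    _ = ∑ h ∈ H, ((lo h : ℝ) * w h
          - ∑ i ∈ univ.filter (fun i => h i ∉ U i), (1 - ζ i) * w h) := by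
        refine Finset.sum_congr rfl fun h _ => ?_
        rw [Finset.sum_congr rfl (fun i _ => show ζ i * w h = w h - (1 - ζ i) * w h by ring),
          Finset.sum_sub_distrib, Finset.sum_const, nsmul_eq_mul, hcardout h]
    _ = ∑ h ∈ H, (lo h : ℝ) * w h
          - ∑ h ∈ H, ∑ i ∈ univ.filter (fun i => h i ∉ U i), (1 - ζ i) * w h :=
        Finset.sum_sub_distrib _ _
    _ = ∑ h ∈ H, (lo h : ℝ) * w h
          - ∑ h ∈ H, ∑ l ∈ univ.filter (fun l => h l ∉ U l),
              (1 - ζ l) * r l (h l) / (deg l (h l) : ℝ) := by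
        congr 1
        rw [hswap (fun i h => (1 - ζ i) * w h),
          hswap (fun l h => (1 - ζ l) * r l (h l) / (deg l (h l) : ℝ))]
        refine Finset.sum_congr rfl fun i _ => ?_
        calc ∑ h ∈ H.filter (fun h => h i ∉ U i), (1 - ζ i) * w h
            = (1 - ζ i) * ∑ h ∈ H.filter (fun h => h i ∉ U i), w h :=
              (Finset.mul_sum _ _ _).symm
          _ = (1 - ζ i) * ∑ v ∈ (U i)ᶜ, r i v := by rw [← hpio i]
          _ = (1 - ζ i) * ∑ h ∈ H.filter (fun h => h i ∉ U i),
                r i (h i) / (deg i (h i) : ℝ) := by rw [← hpio' i]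
          _ = ∑ h ∈ H.filter (fun h => h i ∉ U i),
                (1 - ζ i) * r i (h i) / (deg i (h i) : ℝ) := by
              rw [Finset.mul_sum]
              exact Finset.sum_congr rfl fun h _ => (mul_div_assoc _ _ _).symm
    _ = ∑ h ∈ H, ((lo h : ℝ) * w h
          - ∑ l ∈ univ.filter (fun l => h l ∉ U l),
              (1 - ζ l) * r l (h l) / (deg l (h l) : ℝ)) :=
        (Finset.sum_sub_distrib _ _).symm
    _ ≤ ∑ h ∈ H, ((lo h : ℝ) / (Fintype.card ι : ℝ)) *
          ∑ l ∈ univ.filter (fun l => h l ∈ U l), (1 - ζ l) * (ζbar / Vol l + A0) := by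
        refine Finset.sum_le_sum fun h _ => ?_
        set Sin := ∑ l ∈ univ.filter (fun l => h l ∈ U l),
          (1 - ζ l) * r l (h l) / (deg l (h l) : ℝ) with hSin
        set Sout := ∑ l ∈ univ.filter (fun l => ¬ h l ∈ U l),
          (1 - ζ l) * r l (h l) / (deg l (h l) : ℝ) with hSout
        have hsplit : w h = (1 / (Fintype.card ι : ℝ)) * (Sin + Sout) := by
          simp only [hw, hSin, hSout]
          congr 1
          exact (Finset.sum_filter_add_sum_filter_not univ (fun l => h l ∈ U l) _).symm
        have hSout_nonneg : 0 ≤ Sout :=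
          Finset.sum_nonneg fun l _ => hterm_nonneg l (h l)
        have hSinle : Sin ≤ ∑ l ∈ univ.filter (fun l => h l ∈ U l),
            (1 - ζ l) * (ζbar / Vol l + A0) := by
          refine Finset.sum_le_sum fun l _ => ?_
          rw [mul_div_assoc]
          exact mul_le_mul_of_nonneg_left (hB l (h l)) (h1ζ l)
        have hlodivle : (lo h : ℝ) / (Fintype.card ι : ℝ) ≤ 1 := by
          rw [div_le_one hMpos]; exact hloM h
        have hlodiv_nonneg : 0 ≤ (lo h : ℝ) / (Fintype.card ι : ℝ) := by positivity
        calc (lo h : ℝ) * w h - Sout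
            = ((lo h : ℝ) / (Fintype.card ι : ℝ)) * Sin
              + (((lo h : ℝ) / (Fintype.card ι : ℝ)) * Sout - Sout) := by
              rw [hsplit]; ring
          _ ≤ ((lo h : ℝ) / (Fintype.card ι : ℝ)) * Sin := by
              have : ((lo h : ℝ) / (Fintype.card ι : ℝ)) * Sout ≤ 1 * Sout :=
                mul_le_mul_of_nonneg_right hlodivle hSout_nonneg
              nlinarith
          _ ≤ ((lo h : ℝ) / (Fintype.card ι : ℝ)) *
              ∑ l ∈ univ.filter (fun l => h l ∈ U l), (1 - ζ l) * (ζbar / Vol l + A0) :=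
              mul_le_mul_of_nonneg_left hSinle hlodiv_nonneg
end
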